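/- arXiv:math/0311257 — 6 statements merged into one kernel-verified Lean document; each statement's English description precedes it below -/
import Mathlib

section
/- The quasi-homomorphism Δ on a free group F with basis X, defined by Δ(w) = 0 for one-syllable words and Δ(v_1⋯v_{m-1}v_m) = Δ(v_1⋯v_{m-1}) + sign(l − k) when the last two syllables are a^{±k}, b^{±l} with a ≠ b ∈ X and k,l ∈ ℕ, satisfies Δ(w) + Δ(w⁻¹) = 0 for every w ∈ F. -/
/-- The list of syllable lengths (exponent magnitudes) of the reduced word of `w`. -/
def syllableLengths {X : Type*} [DecidableEq X] (w : FreeGroup X) : List ℕ :=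
  (w.toWord.splitBy (fun a b => a.1 == b.1)).map List.length

/-- The quasi-homomorphism `Δ`: the sum, over consecutive pairs of syllables
`a^{±k}`, `b^{±l}`, of `sign (l - k)`. -/
def delta {X : Type*} [DecidableEq X] (w : FreeGroup X) : ℤ :=
  ((syllableLengths w).zip (syllableLengths w).tail).foldl
    (fun acc p => acc + Int.sign ((p.2 : ℤ) - (p.1 : ℤ))) 0

/-!
Inverting a reduced word reverses it and flips every exponent, so the syllable lengths of `w⁻¹`
are those of `w` in reverse order. Reversing a sequence swaps every pair of consecutive entries,
which negates each `sign (l - k)` and hence their sum.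
-/

namespace List

variable {α β : Type*}

theorem splitBy_map (r : β → β → Bool) (f : α → β) (l : List α) :
    (l.map f).splitBy r = (l.splitBy fun a b => r (f a) (f b)).map (map f) := by
  rw [splitBy_eq_iff]
  refine ⟨by simp [← map_flatten], by simp [nil_notMem_splitBy], ?_, ?_⟩
  · simp only [mem_map, forall_exists_index, and_imp, forall_apply_eq_imp_iff₂, isChain_map]
    exact fun m hm => isChain_of_mem_splitBy hm
  · rw [isChain_map]
    refine (isChain_getLast_head_splitBy _ l).imp fun a b ⟨ha, hb, h⟩ => ?_
    exact ⟨by simpa using ha, by simpa using hb, by simpa [getLast_map, head_map] using h⟩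

theorem splitBy_reverse {r : α → α → Bool} (hr : ∀ a b, r a b = r b a) (l : List α) :
    l.reverse.splitBy r = ((l.splitBy r).map reverse).reverse := by
  rw [splitBy_eq_iff]
  refine ⟨by rw [← reverse_flatten, flatten_splitBy], by simp [nil_notMem_splitBy], ?_, ?_⟩
  · simp only [mem_reverse, mem_map, forall_exists_index, and_imp, forall_apply_eq_imp_iff₂,
      isChain_reverse]
    exact fun m hm => (isChain_of_mem_splitBy hm).imp fun a b h => by rwa [hr]
  · rw [isChain_reverse, isChain_map]
    refine (isChain_getLast_head_splitBy _ l).imp fun a b ⟨ha, hb, h⟩ => ?_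
    exact ⟨by simpa using hb, by simpa using ha, by simpa [hr] using h⟩

theorem zip_tail_reverse (l : List α) :
    l.reverse.zip l.reverse.tail = ((l.zip l.tail).map Prod.swap).reverse :=
  ext_getElem (by simp) fun _ _ _ => by grind

theorem sum_map_zip_tail_reverse {M : Type*} [AddCommGroup M] (g : α × α → M)
    (hg : ∀ p, g p.swap = -g p) (l : List α) :
    ((l.reverse.zip l.reverse.tail).map g).sum = -((l.zip l.tail).map g).sum := by
  rw [zip_tail_reverse, map_reverse, sum_reverse, map_map, sum_neg, map_map]
  simp [Function.comp_def, hg]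

end List

theorem syllableLengths_inv {X : Type*} [DecidableEq X] (w : FreeGroup X) :
    syllableLengths w⁻¹ = (syllableLengths w).reverse := by
  rw [syllableLengths, FreeGroup.toWord_inv, FreeGroup.invRev,
    List.splitBy_reverse (fun a b => Bool.beq_comm), List.splitBy_map]
  simp [syllableLengths, Function.comp_def]

theorem delta_eq_sum {X : Type*} [DecidableEq X] (w : FreeGroup X) :
    delta w = (((syllableLengths w).zip (syllableLengths w).tail).map
      fun p => Int.sign ((p.2 : ℤ) - p.1)).sum := by
  rw [delta, List.sum_eq_foldl, List.foldl_map]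

/-- `Δ w + Δ w⁻¹ = 0` for every `w`. -/
theorem delta_add_delta_inv {X : Type*} [DecidableEq X] (w : FreeGroup X) :
    delta w + delta w⁻¹ = 0 := by
  rw [delta_eq_sum, delta_eq_sum, syllableLengths_inv, List.sum_map_zip_tail_reverse,
    add_neg_cancel]
  exact fun p => by rw [← Int.sign_neg, neg_sub]; rfl
end

section
/- For distinct basis elements x_1, x_2 of a free group F and every n ≥ 1, the word w_n = x_1 x_2 x_1² x_2² ⋯ x_1ⁿ x_2ⁿ satisfies Δ(w_n) = n − 1, where Δ is the syllable-sign quasi-homomorphism. -/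
open List

namespace List

variable {α : Type*}

theorem splitBy_replicate {r : α → α → Bool} {a : α} (ha : r a a) {n : ℕ} (hn : n ≠ 0) :
    (replicate n a).splitBy r = [replicate n a] :=
  splitBy_of_isChain (by simpa using hn) (isChain_replicate_of_rel n ha)

theorem splitBy_flatMap_replicate_pair {r : α → α → Bool} {x y : α} (hx : r x x) (hy : r y y)
    (hxy : r x y = false) (hyx : r y x = false) :
    ∀ {ks : List ℕ}, (∀ k ∈ ks, k ≠ 0) →
      (ks.flatMap fun k => replicate k x ++ replicate k y).splitBy r =
        ks.flatMap fun k => [replicate k x, replicate k y]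
  | [], _ => rfl
  | k :: ks, hks => by
    have hk : k ≠ 0 := hks k mem_cons_self
    have head_rest :
        ∀ z ∈ (ks.flatMap fun k => replicate k x ++ replicate k y).head?, z = x := by
      cases ks with
      | nil => simp
      | cons k' _ =>
        obtain ⟨j, rfl⟩ := Nat.exists_eq_succ_of_ne_zero (hks k' (by simp))
        simp [replicate_succ]
    rw [flatMap_cons, flatMap_cons, splitBy_append, splitBy_append, splitBy_replicate hx hk,
      splitBy_replicate hy hk, splitBy_flatMap_replicate_pair hx hy hxy hyx
        fun k hk => hks k (mem_cons_of_mem _ hk)]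
    · rfl
    · simp_all [getLast?_replicate, head?_replicate]
    · intro a ha b hb
      rw [head_rest b hb]
      simp_all [getLast?_append, getLast?_replicate]

end List

namespace FreeGroup

variable {α : Type*}

theorem of_pow_eq_mk (a : α) (n : ℕ) : of a ^ n = mk (replicate n (a, true)) := by
  rw [of, pow_mk, flatten_replicate_singleton]

theorem isReduced_of_forall_snd_eq {L : List (α × Bool)} {b : Bool} (h : ∀ p ∈ L, p.2 = b) :
    IsReduced L :=
  Pairwise.isChain <| pairwise_of_forall_mem_list fun p hp q hq _ => (h p hp).trans (h q hq).symm

theorem prod_map_pow_mul_pow_eq_mk (x y : α) (ks : List ℕ) :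
    (ks.map fun k => of x ^ k * of y ^ k).prod =
      mk (ks.flatMap fun k => replicate k (x, true) ++ replicate k (y, true)) := by
  induction ks with
  | nil => rfl
  | cons k ks ih => rw [map_cons, prod_cons, ih, of_pow_eq_mk, of_pow_eq_mk, mul_mk, mul_mk,
      flatMap_cons]

theorem toWord_prod_map_pow_mul_pow [DecidableEq α] (x y : α) (ks : List ℕ) :
    (ks.map fun k => of x ^ k * of y ^ k).prod.toWord =
      ks.flatMap fun k => replicate k (x, true) ++ replicate k (y, true) := by
  rw [prod_map_pow_mul_pow_eq_mk, toWord_mk, IsReduced.reduce_eq]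
  refine isReduced_of_forall_snd_eq (b := true) fun p hp => ?_
  simp only [mem_flatMap, mem_append, mem_replicate] at hp
  obtain ⟨_, _, ⟨_, rfl⟩ | ⟨_, rfl⟩⟩ := hp <;> rfl

end FreeGroup

def signSum (l : List ℕ) : ℤ :=
  ((l.zip l.tail).map fun p => Int.sign ((p.2 : ℤ) - p.1)).sum

theorem delta_eq_signSum {X : Type*} [DecidableEq X] (w : FreeGroup X) :
    delta w = signSum (syllableLengths w) := by
  rw [signSum, sum_eq_foldl, foldl_map]
  rfl

theorem signSum_cons_cons (a b : ℕ) (l : List ℕ) :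
    signSum (a :: b :: l) = Int.sign ((b : ℤ) - a) + signSum (b :: l) := by
  simp [signSum]

theorem signSum_flatMap_pair : ∀ l : List ℕ, signSum (l.flatMap fun k => [k, k]) = signSum l
  | [] => rfl
  | [a] => by simp [signSum]
  | a :: b :: l => by
    have ih := signSum_flatMap_pair (b :: l)
    simp only [flatMap_cons, cons_append, nil_append] at ih ⊢
    rw [signSum_cons_cons, signSum_cons_cons, ih, signSum_cons_cons]
    simp

theorem signSum_of_isChain_lt :
    ∀ {l : List ℕ}, l ≠ [] → l.IsChain (· < ·) → signSum l = l.length - 1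
  | [a], _, _ => by simp [signSum]
  | a :: b :: l, _, h => by
    rw [isChain_cons_cons] at h
    rw [signSum_cons_cons, signSum_of_isChain_lt (cons_ne_nil b l) h.2,
      Int.sign_eq_one_of_pos (by omega)]
    simp only [length_cons, Nat.cast_add, Nat.cast_one]
    ring

theorem syllableLengths_prod_map_pow_mul_pow {X : Type*} [DecidableEq X] {x₁ x₂ : X}
    (h : x₁ ≠ x₂) {ks : List ℕ} (hks : ∀ k ∈ ks, k ≠ 0) :
    syllableLengths (ks.map fun k => FreeGroup.of x₁ ^ k * FreeGroup.of x₂ ^ k).prod =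
      ks.flatMap fun k => [k, k] := by
  rw [syllableLengths, FreeGroup.toWord_prod_map_pow_mul_pow,
    splitBy_flatMap_replicate_pair (by simp) (by simp) (by simpa using h)
      (by simpa using h.symm) hks, map_flatMap]
  simp

/-- for distinct basis letters, the word
`w_n = x₁ x₂ x₁² x₂² ⋯ x₁ⁿ x₂ⁿ` satisfies `Δ(w_n) = n - 1`. -/
theorem delta_wn {X : Type*} [DecidableEq X] (x₁ x₂ : X) (h : x₁ ≠ x₂)
    (n : ℕ) (hn : 1 ≤ n) :
    delta (((List.range n).map
        (fun i => FreeGroup.of x₁ ^ (i + 1) * FreeGroup.of x₂ ^ (i + 1))).prod)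
      = (n : ℤ) - 1 := by
  have hw :
      (List.range n).map (fun i => FreeGroup.of x₁ ^ (i + 1) * FreeGroup.of x₂ ^ (i + 1)) =
      ((range n).map (· + 1)).map fun k => FreeGroup.of x₁ ^ k * FreeGroup.of x₂ ^ k := by
    rw [map_map]; rfl
  rw [hw, delta_eq_signSum, syllableLengths_prod_map_pow_mul_pow h (by simp),
    signSum_flatMap_pair, signSum_of_isChain_lt (by simpa using Nat.one_le_iff_ne_zero.mp hn)
      ((pairwise_lt_range.map (· + 1) fun _ _ => Nat.succ_lt_succ).isChain),
    length_map, length_range]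
end

section
/- The palindromic width of a non-abelian free group F is infinite: for every k ∈ ℕ there exists an element of F that is not a product of k palindromes with respect to a given basis X. -/
/-!
For distinct basis elements `x, y`, let `f w` count the occurrences of `x y` and `x⁻¹ y⁻¹` in the
reduced word of `w`, minus those of `y x` and `y⁻¹ x⁻¹`. Reversing a word negates `f`, so `f`
vanishes on palindromes. Inverting a word negates `f` as well; since the reduced word of `u v` is
`A B` when those of `u` and `v` are `A C` and `C⁻¹ B`, the `C`-terms cancel and only the three
junctions contribute, so `|f (u v) - f u - f v| ≤ 3`. Hence `|f| ≤ 3 k` on products of `k`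
palindromes, whereas `f ([x, y] ^ n) = 2 n`.
-/

/-- `w` is a palindrome w.r.t. the basis `X`: its reduced word equals its reverse. -/
def IsPalindrome {X : Type*} [DecidableEq X] (w : FreeGroup X) : Prop :=
  w.toWord.reverse = w.toWord

/-- `w` is a product of at most `k` elements of `S`. -/
def IsProductOfAtMost {G : Type*} [Monoid G] (S : Set G) (k : ℕ) (w : G) : Prop :=
  ∃ l : List G, l.length ≤ k ∧ (∀ x ∈ l, x ∈ S) ∧ l.prod = w

namespace PalindromicWidth

open FreeGroup commutatorElement

section Monoid

variable {G : Type*} [Monoid G] {f : G → ℤ} {D : ℤ} {S : Set G}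

lemma abs_prod_le_mul_length (hf : ∀ u v, |f (u * v) - f u - f v| ≤ D) (hS : ∀ s ∈ S, f s = 0)
    (hf₁ : f 1 = 0) {l : List G} (hl : ∀ s ∈ l, s ∈ S) : |f l.prod| ≤ D * l.length := by
  induction l with
  | nil => simp [hf₁]
  | cons s l ih =>
    have hs : f s = 0 := hS s (hl s List.mem_cons_self)
    have ih' := ih fun t ht ↦ hl t (List.mem_cons_of_mem s ht)
    calc |f (s * l.prod)| = |(f (s * l.prod) - f s - f l.prod) + f l.prod| := by
          rw [hs]; congr 1; ring
      _ ≤ D + D * l.length := (abs_add_le _ _).trans (add_le_add (hf _ _) ih')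
      _ = D * (s :: l).length := by push_cast [List.length_cons]; ring

lemma abs_le_mul_of_isProductOfAtMost (hf : ∀ u v, |f (u * v) - f u - f v| ≤ D)
    (hS : ∀ s ∈ S, f s = 0) (hf₁ : f 1 = 0) {k : ℕ} {w : G} (hw : IsProductOfAtMost S k w) :
    |f w| ≤ D * k := by
  obtain ⟨l, hlk, hlS, rfl⟩ := hw
  have hD : 0 ≤ D := by simpa [hf₁] using hf 1 1
  calc |f l.prod| ≤ D * l.length := abs_prod_le_mul_length hf hS hf₁ hlS
    _ ≤ D * k := mul_le_mul_of_nonneg_left (by exact_mod_cast hlk) hD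

end Monoid

section AdjacentSum

variable {α : Type*} (φ : α → α → ℤ)

def adjacentSum : List α → ℤ
  | a :: b :: L => φ a b + adjacentSum (b :: L)
  | _ => 0

@[simp] lemma adjacentSum_nil : adjacentSum φ [] = 0 := rfl

@[simp] lemma adjacentSum_singleton (a : α) : adjacentSum φ [a] = 0 := rfl

@[simp] lemma adjacentSum_cons_cons (a b : α) (L : List α) :
    adjacentSum φ (a :: b :: L) = φ a b + adjacentSum φ (b :: L) := rfl

lemma adjacentSum_append_cons (L M : List α) (a : α) :
    adjacentSum φ (L ++ a :: M) = adjacentSum φ (L ++ [a]) + adjacentSum φ (a :: M) := by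
  induction L with
  | nil => simp
  | cons b L ih =>
    cases L with
    | nil => simp
    | cons c L => simp only [List.cons_append, adjacentSum_cons_cons] at ih ⊢; rw [ih]; ring

lemma adjacentSum_reverse (L : List α) : adjacentSum φ L.reverse = adjacentSum (flip φ) L := by
  induction L with
  | nil => rfl
  | cons a L ih =>
    cases L with
    | nil => rfl
    | cons b L =>
      rw [List.reverse_cons, List.reverse_cons, List.append_assoc, List.singleton_append,
        adjacentSum_append_cons, ← List.reverse_cons, ih]
      simp only [adjacentSum_cons_cons, adjacentSum_singleton, flip]
      ring

lemma adjacentSum_map {β : Type*} (g : β → α) (L : List β) :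
    adjacentSum φ (L.map g) = adjacentSum (fun a b ↦ φ (g a) (g b)) L := by
  induction L with
  | nil => rfl
  | cons a L ih => cases L with
    | nil => rfl
    | cons b L => simp only [List.map_cons, adjacentSum_cons_cons] at ih ⊢; rw [ih]

lemma adjacentSum_neg (L : List α) : adjacentSum (fun a b ↦ -φ a b) L = -adjacentSum φ L := by
  induction L with
  | nil => simp
  | cons a L ih => cases L with
    | nil => simp
    | cons b L => simp only [adjacentSum_cons_cons] at ih ⊢; rw [ih]; ring

lemma adjacentSum_eq_zero_of_reverse_eq (hφ : ∀ a b, φ b a = -φ a b) {L : List α}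
    (hL : L.reverse = L) : adjacentSum φ L = 0 := by
  have h := adjacentSum_reverse φ L
  rw [hL, show flip φ = fun a b ↦ -φ a b from funext₂ fun a b ↦ hφ a b, adjacentSum_neg] at h
  linarith

lemma abs_adjacentSum_append_sub_le {B : ℤ} (hB₀ : 0 ≤ B) (hB : ∀ a b, |φ a b| ≤ B)
    (L M : List α) : |adjacentSum φ (L ++ M) - adjacentSum φ L - adjacentSum φ M| ≤ B := by
  rcases M with _ | ⟨b, M⟩
  · simpa using hB₀
  rcases L.eq_nil_or_concat with rfl | ⟨L, a, rfl⟩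
  · simpa using hB₀
  rw [List.concat_eq_append, List.append_assoc, List.singleton_append, adjacentSum_append_cons,
    adjacentSum_cons_cons]
  simpa using hB a b

end AdjacentSum

section Cancellation

variable {α : Type*} [DecidableEq α]

theorem exists_reduce_append_eq {L M : List (α × Bool)} (hL : IsReduced L) (hM : IsReduced M) :
    ∃ A B C, L = A ++ C ∧ M = invRev C ++ B ∧ reduce (L ++ M) = A ++ B := by
  induction L using List.reverseRecOn generalizing M with
  | nil => exact ⟨[], M, [], rfl, by simp, by simpa using hM.reduce_eq⟩
  | append_singleton L p ih =>
    rcases M with _ | ⟨q, M⟩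
    · exact ⟨L ++ [p], [], [], by simp, by simp, by simpa using hL.reduce_eq⟩
    by_cases hq : q = (p.1, !p.2)
    · subst hq
      obtain ⟨A, B, C, rfl, rfl, hAB⟩ :=
        ih (hL.infix (List.prefix_append _ _).isInfix) (hM.infix (List.suffix_cons _ _).isInfix)
      refine ⟨A, B, C ++ [p], by simp, by simp [invRev], ?_⟩
      have hcancel : A ++ C ++ [p] ++ (p.1, !p.2) :: (invRev C ++ B) =
          A ++ C ++ (p.1, p.2) :: (p.1, !p.2) :: (invRev C ++ B) := by simp
      rw [hcancel, reduce.Step.eq Red.Step.not, hAB]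
    · refine ⟨L ++ [p], q :: M, [], by simp, by simp, IsReduced.reduce_eq ?_⟩
      refine hL.append_overlap (L₂ := [p]) ?_ (List.cons_ne_nil _ _)
      refine isReduced_cons_cons.mpr ⟨fun h₁ ↦ ?_, hM⟩
      obtain ⟨a, b⟩ := p
      obtain ⟨a', b'⟩ := q
      cases b <;> cases b' <;> simp_all

theorem exists_toWord_mul_eq (u v : FreeGroup α) :
    ∃ A B C, u.toWord = A ++ C ∧ v.toWord = invRev C ++ B ∧ (u * v).toWord = A ++ B := by
  rw [toWord_mul]
  exact exists_reduce_append_eq isReduced_toWord isReduced_toWord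

end Cancellation

section Quasimorphism

variable {α : Type*} {φ : α × Bool → α × Bool → ℤ}

lemma adjacentSum_invRev (hφ : ∀ a b, φ (b.1, !b.2) (a.1, !a.2) = -φ a b)
    (L : List (α × Bool)) : adjacentSum φ (invRev L) = -adjacentSum φ L := by
  rw [invRev, adjacentSum_reverse, adjacentSum_map, ← adjacentSum_neg]
  exact congrArg₂ _ (funext₂ fun a b ↦ hφ a b) rfl

theorem abs_adjacentSum_toWord_mul_sub_le [DecidableEq α] {c : ℤ} (hc₀ : 0 ≤ c)
    (hc : ∀ a b, |φ a b| ≤ c) (hφ : ∀ a b, φ (b.1, !b.2) (a.1, !a.2) = -φ a b)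
    (u v : FreeGroup α) :
    |adjacentSum φ (u * v).toWord - adjacentSum φ u.toWord - adjacentSum φ v.toWord| ≤ 3 * c := by
  obtain ⟨A, B, C, hu, hv, huv⟩ := exists_toWord_mul_eq u v
  rw [huv, hu, hv]
  have hAB := abs_adjacentSum_append_sub_le φ hc₀ hc A B
  have hAC := abs_adjacentSum_append_sub_le φ hc₀ hc A C
  have hCB := abs_adjacentSum_append_sub_le φ hc₀ hc (invRev C) B
  rw [adjacentSum_invRev hφ] at hCB
  rw [abs_le] at hAB hAC hCB ⊢
  constructor <;> linarith

end Quasimorphism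

section Commutator

variable {α : Type*} [DecidableEq α]

def commutatorWeight (x y : α) (a b : α × Bool) : ℤ :=
  (if a.1 = x ∧ b.1 = y ∧ a.2 = b.2 then 1 else 0) -
    (if b.1 = x ∧ a.1 = y ∧ b.2 = a.2 then 1 else 0)

lemma commutatorWeight_swap (x y : α) (a b : α × Bool) :
    commutatorWeight x y b a = -commutatorWeight x y a b := by
  unfold commutatorWeight; ring

lemma commutatorWeight_inv (x y : α) (a b : α × Bool) :
    commutatorWeight x y (b.1, !b.2) (a.1, !a.2) = -commutatorWeight x y a b := by
  simp only [commutatorWeight, Bool.not_inj_iff]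
  ring

lemma abs_commutatorWeight_le (x y : α) (a b : α × Bool) : |commutatorWeight x y a b| ≤ 1 := by
  unfold commutatorWeight; split_ifs <;> norm_num

def commutatorWord (x y : α) : List (α × Bool) := [(x, true), (y, true), (x, false), (y, false)]

omit [DecidableEq α] in
lemma isCyclicallyReduced_commutatorWord {x y : α} (hxy : x ≠ y) :
    IsCyclicallyReduced (commutatorWord x y) := by
  simp [commutatorWord, isCyclicallyReduced_iff, hxy, hxy.symm]

lemma toWord_commutator_of_pow {x y : α} (hxy : x ≠ y) (n : ℕ) :
    (⁅(of x : FreeGroup α), of y⁆ ^ n).toWord =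
      (List.replicate n (commutatorWord x y)).flatten := by
  have hc := isCyclicallyReduced_commutatorWord hxy
  have hmk : ⁅(of x : FreeGroup α), of y⁆ = mk (commutatorWord x y) := by
    simp [commutatorElement_def, commutatorWord, of, inv_mk, mul_mk, invRev]
  rw [hmk, toWord_pow, toWord_mk, hc.isReduced.reduce_eq,
    (hc.flatten_replicate n).isReduced.reduce_eq]

lemma adjacentSum_commutatorWeight_commutatorWord_append {x y : α} (hxy : x ≠ y)
    (M : List (α × Bool)) :
    adjacentSum (commutatorWeight x y) (commutatorWord x y ++ (x, true) :: M) =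
      2 + adjacentSum (commutatorWeight x y) ((x, true) :: M) := by
  simp [commutatorWord, commutatorWeight, hxy, hxy.symm, ← add_assoc, one_add_one_eq_two]

lemma adjacentSum_commutatorWeight_flatten_replicate {x y : α} (hxy : x ≠ y) (n : ℕ) :
    adjacentSum (commutatorWeight x y) (List.replicate n (commutatorWord x y)).flatten = 2 * n := by
  induction n with
  | zero => rfl
  | succ n ih =>
    rcases n with _ | n
    · simp [commutatorWord, commutatorWeight, hxy, hxy.symm]
    obtain ⟨M, hM⟩ : ∃ M, (List.replicate (n + 1) (commutatorWord x y)).flatten = (x, true) :: M :=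
      ⟨_, rfl⟩
    rw [List.replicate_succ, List.flatten_cons, hM,
      adjacentSum_commutatorWeight_commutatorWord_append hxy, ← hM, ih]
    push_cast
    ring

end Commutator

end PalindromicWidth

open PalindromicWidth FreeGroup commutatorElement

/-- the palindromic width of a non-abelian free group is infinite. -/
theorem palindromic_width_infinite {X : Type*} [DecidableEq X]
    (hX : ∃ x y : X, x ≠ y) (k : ℕ) :
    ∃ w : FreeGroup X,
      ¬ IsProductOfAtMost {p : FreeGroup X | IsPalindrome p} k w := by
  obtain ⟨x, y, hxy⟩ := hX
  refine ⟨⁅of x, of y⁆ ^ (2 * k + 1), fun hw ↦ ?_⟩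
  have hquasi := abs_adjacentSum_toWord_mul_sub_le zero_le_one (abs_commutatorWeight_le x y)
    (commutatorWeight_inv x y)
  have hpal (p : FreeGroup X) (hp : IsPalindrome p) :
      adjacentSum (commutatorWeight x y) p.toWord = 0 :=
    adjacentSum_eq_zero_of_reverse_eq _ (commutatorWeight_swap x y) hp
  have hbound := abs_le_mul_of_isProductOfAtMost
    (f := fun w : FreeGroup X ↦ adjacentSum (commutatorWeight x y) w.toWord) hquasi hpal
    (by simp) hw
  rw [toWord_commutator_of_pow hxy, adjacentSum_commutatorWeight_flatten_replicate hxy] at hbound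
  push_cast at hbound
  linarith [le_abs_self (2 * (2 * (k : ℤ) + 1))]
end

section
/- Every primitive element of the free group F_2 of rank 2 is a product of at most two palindromes with respect to a fixed basis {x, y}. -/
/-- `w` is a primitive element: a member of some basis, i.e. the image of a basis
element under some automorphism. -/
def IsPrimitive {X : Type*} (w : FreeGroup X) : Prop :=
  ∃ (φ : FreeGroup X ≃* FreeGroup X) (x : X), φ (FreeGroup.of x) = w

open Relation

namespace FreeGroup

section Words

open List

variable {α : Type*} [DecidableEq α]

theorem toWord_mul_of_eq_append {x y : FreeGroup α} {X C Y : List (α × Bool)}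
    (hx : x.toWord = X ++ C) (hy : y.toWord = invRev C ++ Y) (h : IsReduced (X ++ Y)) :
    (x * y).toWord = X ++ Y := by
  have : x * y = mk (X ++ Y) := by
    rw [← mk_toWord (x := x), ← mk_toWord (x := y), hx, hy, ← mul_mk, ← mul_mk, ← mul_mk,
      ← inv_mk]
    group
  rw [this, toWord_mk, h.reduce_eq]

theorem exists_eq_append_invRev_append :
    ∀ {L M : List (α × Bool)}, IsReduced L → IsReduced M →
      ∃ X C Y, L = X ++ C ∧ M = invRev C ++ Y ∧ IsReduced (X ++ Y) := by
  intro L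
  induction L using List.reverseRecOn with
  | nil => exact fun {M} _ hM => ⟨[], [], M, rfl, rfl, hM⟩
  | append_singleton L u ih =>
    rintro (_ | ⟨v, M⟩) hL hM
    · exact ⟨L ++ [u], [], [], (append_nil _).symm, rfl, by simpa using hL⟩
    by_cases huv : u = (v.1, !v.2)
    · obtain ⟨X, C, Y, rfl, hM', hXY⟩ :=
        ih (hL.infix (infix_append_left ..)) (hM.infix (suffix_cons ..).isInfix)
      exact ⟨X, C ++ [u], Y, by simp, by rw [hM', invRev_append, huv]; simp [invRev], hXY⟩
    · refine ⟨L ++ [u], [], v :: M, (append_nil _).symm, rfl, ?_⟩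
      refine IsReduced.append_overlap (L₂ := [u]) (by simpa using hL) ?_ (cons_ne_nil _ _)
      refine isReduced_cons_cons.2 ⟨fun h => ?_, hM⟩
      obtain ⟨u₁, u₂⟩ := u
      cases u₂ <;> cases hv : v.2 <;> simp_all [Prod.ext_iff]

theorem exists_toWord_mul (x y : FreeGroup α) : ∃ X C Y, x.toWord = X ++ C ∧
    y.toWord = invRev C ++ Y ∧ (x * y).toWord = X ++ Y := by
  obtain ⟨X, C, Y, hx, hy, h⟩ :=
    exists_eq_append_invRev_append (isReduced_toWord (x := x)) (isReduced_toWord (x := y))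
  exact ⟨X, C, Y, hx, hy, toWord_mul_of_eq_append hx hy h⟩

theorem norm_lt_norm_mul_self {x : FreeGroup α} (hx : x ≠ 1) : x.norm < (x * x).norm := by
  open reduceCyclically in
  have hsq : (x * x).toWord = conjugator x.toWord ++
      (reduceCyclically x.toWord ++ reduceCyclically x.toWord) ++
        invRev (conjugator x.toWord) := by
    rw [← sq, toWord_pow, reduce_flatten_replicate isReduced_toWord]
    simp
  have hx' := conj_conjugator_reduceCyclically x.toWord
  have hR : reduceCyclically x.toWord ≠ [] := by
    intro h
    apply hx
    rw [← mk_toWord (x := x), ← hx', h, append_nil, ← mul_mk, ← inv_mk, mul_inv_cancel]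
  have := congrArg length hx'
  simp only [norm, hsq, length_append, invRev_length] at this ⊢
  have := length_pos_of_ne_nil hR
  omega

theorem exists_toWord_of_norm_mul_eq_norm_left {x y : FreeGroup α}
    (h : (y * x).norm = y.norm) :
    ∃ B E A, y.toWord = B ++ E ∧ x.toWord = invRev E ++ A ∧ A.length = E.length := by
  obtain ⟨B, E, A, hy, hx, hyx⟩ := exists_toWord_mul y x
  refine ⟨B, E, A, hy, hx, ?_⟩
  simp only [norm, hy, hyx, length_append] at h
  omega

theorem exists_toWord_of_norm_mul_eq_norm_right {x y : FreeGroup α}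
    (h : (x * y).norm = y.norm) :
    ∃ A C Y, x.toWord = A ++ C ∧ y.toWord = invRev C ++ Y ∧ A.length = C.length := by
  obtain ⟨A, C, Y, hx, hy, hxy⟩ := exists_toWord_mul x y
  refine ⟨A, C, Y, hx, hy, ?_⟩
  simp only [norm, hy, hxy, length_append, invRev_length] at h
  omega

theorem eq_one_of_norm_mul_eq_of_norm_mul_inv_eq {x y : FreeGroup α}
    (h₁ : (y * x).norm = y.norm) (h₂ : (x * y⁻¹).norm = y.norm) : x = 1 := by
  obtain ⟨B, E, A, hy, hx, hAE⟩ := exists_toWord_of_norm_mul_eq_norm_left h₁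
  obtain ⟨A', C, Y, hx', hy', hAC⟩ :=
    exists_toWord_of_norm_mul_eq_norm_right (h₂.trans norm_inv_eq.symm)
  have hy'' : y.toWord = invRev Y ++ C := by
    rw [← invRev_invRev (L₁ := y.toWord), ← toWord_inv, hy', invRev_append, invRev_invRev]
  have hlen := congrArg length (hx.symm.trans hx')
  simp only [length_append, invRev_length] at hlen
  obtain rfl : E = C := (append_inj' (hy.symm.trans hy'') (by omega)).2
  obtain rfl : A = E := (append_inj' (hx.symm.trans hx') hAE).2
  rw [← mk_toWord (x := x), hx, ← mul_mk, ← inv_mk, inv_mul_cancel]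

theorem exists_toWord_of_norm_mul_eq_of_norm_mul_eq {x y : FreeGroup α}
    (h₁ : (y * x).norm = y.norm) (h₂ : (x * y).norm = y.norm) (hle : x.norm ≤ y.norm) :
    ∃ C E M, x.toWord = invRev E ++ C ∧ y.toWord = invRev C ++ M ++ E := by
  obtain ⟨B, E, A, hy, hx, hAE⟩ := exists_toWord_of_norm_mul_eq_norm_left h₁
  obtain ⟨A', C, Y, hx', hy', hAC⟩ := exists_toWord_of_norm_mul_eq_norm_right h₂
  have hlen := congrArg length (hx.symm.trans hx')
  have hleny := congrArg length hy
  simp only [norm, hx, hy, length_append, invRev_length] at hlen hleny hle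
  obtain rfl : A = C := (append_inj' (hx.symm.trans hx') (by omega)).2
  obtain ⟨M, rfl⟩ : invRev A <+: B :=
    prefix_of_prefix_length_le ⟨_, hy'.symm⟩ ⟨_, hy.symm⟩ (by rw [invRev_length]; omega)
  exact ⟨A, E, M, hx, hy⟩

/-- Here `x = p q` and `y = q⁻¹ m p⁻¹` with `|p| + |q| = |x|`, and conjugating by `q⁻¹` turns
`(y * x, x)` into `(m, q p)`. -/
theorem exists_norm_conj_add_norm_conj_le {x y : FreeGroup α} (h₁ : (y * x).norm = y.norm)
    (h₂ : (x * y).norm = y.norm) (hle : x.norm ≤ y.norm) :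
    ∃ g, (g⁻¹ * (y * x) * g).norm + (g⁻¹ * x * g).norm ≤ y.norm := by
  obtain ⟨C, E, M, hx, hy⟩ := exists_toWord_of_norm_mul_eq_of_norm_mul_eq h₁ h₂ hle
  have hx₀ : x = (mk E)⁻¹ * mk C := by rw [← mk_toWord (x := x), hx, inv_mk, mul_mk]
  have hy₀ : y = (mk C)⁻¹ * mk M * mk E := by
    rw [← mk_toWord (x := y), hy, inv_mk, mul_mk, mul_mk]
  refine ⟨(mk C)⁻¹, ?_⟩
  have hyx : (mk C)⁻¹⁻¹ * (y * x) * (mk C)⁻¹ = mk M := by rw [hx₀, hy₀]; group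
  have hx₁ : (mk C)⁻¹⁻¹ * x * (mk C)⁻¹ = mk C * (mk E)⁻¹ := by rw [hx₀]; group
  have hCE : (mk C * (mk E)⁻¹).norm ≤ C.length + E.length :=
    (norm_mul_le _ _).trans (add_le_add norm_mk_le (by rw [norm_inv_eq]; exact norm_mk_le))
  have hM : (mk M).norm ≤ M.length := norm_mk_le
  have hyn : y.norm = C.length + M.length + E.length := by simp [norm, hy, add_assoc]
  rw [hyx, hx₁]
  omega

/-- `x.norm + y.norm - (x * y).norm` is twice the length of the part of `x` cancelled by `y`, so
`hlt` says that the suffix `S` of `x` outlives this cancellation. -/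
theorem exists_toWord_mul_of_suffix {w x y : FreeGroup α} {X S : List (α × Bool)}
    (hw : w.toWord = X ++ S) (hS : S <:+ x.toWord)
    (hlt : x.norm + y.norm < (x * y).norm + 2 * S.length) :
    ∃ S₀ V, (w * y).toWord = X ++ S₀ ++ V ∧ S₀ ≠ [] ∧ V <:+ y.toWord ∧
      2 * V.length + x.norm = y.norm + (x * y).norm := by
  obtain ⟨U, C, V, hx, hy, hxy⟩ := exists_toWord_mul x y
  have hnx : x.norm = U.length + C.length := by simp [norm, hx]
  have hny : y.norm = C.length + V.length := by simp [norm, hy]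
  have hnxy : (x * y).norm = U.length + V.length := by simp [norm, hxy]
  obtain ⟨S₀, rfl⟩ : C <:+ S := suffix_of_suffix_length_le ⟨U, hx.symm⟩ hS (by omega)
  have hS₀ : S₀ ≠ [] := by
    rintro rfl
    simp only [nil_append] at hlt
    omega
  obtain ⟨T, hT⟩ := hS
  have hU : U = T ++ S₀ := (append_inj' (hx.symm.trans (by rw [← hT, append_assoc])) rfl).1
  refine ⟨S₀, V, ?_, hS₀, ⟨invRev C, hy.symm⟩, by omega⟩
  refine toWord_mul_of_eq_append (C := C) (by rw [hw, append_assoc]) hy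
    (IsReduced.append_overlap ?_ ?_ hS₀)
  · exact isReduced_toWord.infix ⟨[], C, by rw [hw]; simp⟩
  · exact (isReduced_toWord (x := x * y)).infix ⟨T, [], by rw [hxy, hU]; simp⟩

end Words

section Reverse

variable {α : Type*}

def reverse (x : FreeGroup α) : FreeGroup α :=
  (lift fun a => MulOpposite.op (of a) : FreeGroup α →* (FreeGroup α)ᵐᵒᵖ) x |>.unop

@[simp] theorem reverse_one : reverse (1 : FreeGroup α) = 1 := by simp [reverse]

theorem reverse_mul (x y : FreeGroup α) : reverse (x * y) = reverse y * reverse x := by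
  simp [reverse]

theorem reverse_inv (x : FreeGroup α) : reverse x⁻¹ = (reverse x)⁻¹ := by simp [reverse]

theorem reverse_mk (L : List (α × Bool)) : reverse (mk L) = mk L.reverse := by
  induction L with
  | nil => exact reverse_one
  | cons u L ih =>
    have hu : reverse (mk [u]) = mk [u] := by
      obtain ⟨a, _ | _⟩ := u <;> simp [reverse] <;> rfl
    rw [← List.singleton_append, ← mul_mk, reverse_mul, ih, hu, List.reverse_append, mul_mk,
      List.reverse_singleton]

theorem reverse_reverse (x : FreeGroup α) : reverse (reverse x) = x := by
  induction x using FreeGroup.induction_on with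
  | C1 => simp
  | of a => simp [reverse]
  | inv_of a h => rw [reverse_inv, reverse_inv, h]
  | mul x y hx hy => rw [reverse_mul, reverse_mul, hx, hy]

theorem toWord_reverse [DecidableEq α] (x : FreeGroup α) :
    (reverse x).toWord = x.toWord.reverse := by
  conv_lhs => rw [← mk_toWord (x := x), reverse_mk, toWord_mk]
  apply IsReduced.reduce_eq
  exact List.isChain_reverse.2 (isReduced_toWord.imp fun _ _ h h' => (h h'.symm).symm)

theorem reverse_eq_self_of_norm_eq_one [DecidableEq α] {x : FreeGroup α} (hx : x.norm = 1) :
    reverse x = x := by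
  obtain ⟨u, hu⟩ := List.length_eq_one_iff.1 hx
  rw [← toWord_inj, toWord_reverse, hu, List.reverse_singleton]

end Reverse

end FreeGroup

theorem isPalindrome_iff_reverse_eq {X : Type*} [DecidableEq X] (w : FreeGroup X) :
    IsPalindrome w ↔ FreeGroup.reverse w = w := by
  rw [IsPalindrome, ← FreeGroup.toWord_reverse, FreeGroup.toWord_inj]

theorem FreeGroup.reverse_inv_mul_eq_of_reverse_eq_conj {α : Type*} {c w : FreeGroup α}
    (hc : reverse c = c) (hw : reverse w = c⁻¹ * w * c) : reverse (c⁻¹ * w) = c⁻¹ * w := by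
  rw [reverse_mul, hw, reverse_inv, hc]
  group

section NielsenMoves

variable {G : Type*} [Group G]

inductive NielsenMove : G × G → G × G → Prop
  | swap (a b : G) : NielsenMove (a, b) (b, a)
  | inv_left (a b : G) : NielsenMove (a, b) (a⁻¹, b)
  | mul_left (a b : G) : NielsenMove (a, b) (a * b, b)
  | conj (a b g : G) : NielsenMove (a, b) (g⁻¹ * a * g, g⁻¹ * b * g)

theorem closure_pair_eq_top_of_mem {a b c d : G} (ha : a ∈ Subgroup.closure {c, d})
    (hb : b ∈ Subgroup.closure {c, d}) (h : Subgroup.closure {a, b} = ⊤) :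
    Subgroup.closure {c, d} = ⊤ := by
  rw [eq_top_iff, ← h, Subgroup.closure_le, Set.insert_subset_iff, Set.singleton_subset_iff]
  exact ⟨ha, hb⟩

theorem NielsenMove.closure_eq_top {p q : G × G} (h : NielsenMove p q)
    (hp : Subgroup.closure {p.1, p.2} = ⊤) : Subgroup.closure {q.1, q.2} = ⊤ := by
  have mem₁ {c d : G} : c ∈ Subgroup.closure {c, d} := Subgroup.subset_closure (by simp)
  have mem₂ {c d : G} : d ∈ Subgroup.closure {c, d} := Subgroup.subset_closure (by simp)
  cases h with
  | swap a b => simpa [Set.pair_comm] using hp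
  | inv_left a b =>
    have ha : a ∈ Subgroup.closure {a⁻¹, b} := by
      simpa using inv_mem (mem₁ (c := a⁻¹) (d := b))
    exact closure_pair_eq_top_of_mem ha mem₂ hp
  | mul_left a b =>
    have ha : a ∈ Subgroup.closure {a * b, b} := by
      simpa using mul_mem (mem₁ (c := a * b) (d := b)) (inv_mem mem₂)
    exact closure_pair_eq_top_of_mem ha mem₂ hp
  | conj a b g =>
    have hconj : ({g⁻¹ * a * g, g⁻¹ * b * g} : Set G) =
        (MulAut.conj g⁻¹).toMonoidHom '' {a, b} := by
      simp [Set.image_pair]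
    change Subgroup.closure {g⁻¹ * a * g, g⁻¹ * b * g} = ⊤
    rw [hconj, ← MonoidHom.map_closure, hp,
      Subgroup.map_top_of_surjective _ (MulAut.conj g⁻¹).surjective]

theorem closure_eq_top_of_reflTransGen {p q : G × G} (h : ReflTransGen NielsenMove p q)
    (hp : Subgroup.closure {p.1, p.2} = ⊤) : Subgroup.closure {q.1, q.2} = ⊤ := by
  induction h with
  | refl => exact hp
  | tail _ hmove ih => exact hmove.closure_eq_top ih

theorem reflTransGen_nielsenMove_cond (a b : G) (s t : Bool) :
    ReflTransGen NielsenMove (a, b) (cond s a a⁻¹, cond t b b⁻¹) := by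
  have inv_right (c d : G) : ReflTransGen NielsenMove (c, d) (c, d⁻¹) :=
    .tail (.tail (.single (.swap c d)) (.inv_left d c)) (.swap d⁻¹ c)
  cases s <;> cases t
  · exact (ReflTransGen.single (.inv_left a b)).trans (inv_right _ _)
  · exact .single (.inv_left a b)
  · exact inv_right a b
  · exact .refl

end NielsenMoves

section LetterImage

variable {ι G : Type*} [Group G]

def letterImage (f : ι → G) (u : ι × Bool) : G := cond u.2 (f u.1) (f u.1)⁻¹

theorem letterImage_not (f : ι → G) (u : ι × Bool) :
    letterImage f (u.1, !u.2) = (letterImage f u)⁻¹ := by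
  cases h : u.2 <;> simp [letterImage, h]

theorem reflTransGen_nielsenMove_letterImage (a b : G) {u v : Fin 2 × Bool} (h : u.1 ≠ v.1) :
    ReflTransGen NielsenMove (a, b) (letterImage ![a, b] u, letterImage ![a, b] v) := by
  obtain ⟨i, s⟩ := u
  obtain ⟨j, t⟩ := v
  fin_cases i <;> fin_cases j <;> simp only [ne_eq, not_true_eq_false] at h
  · exact reflTransGen_nielsenMove_cond a b s t
  · exact .head (.swap a b) (reflTransGen_nielsenMove_cond b a s t)

theorem letterImage_ne_one {f : ι → G} (hf : ∀ i, f i ≠ 1) (u : ι × Bool) :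
    letterImage f u ≠ 1 := by
  cases h : u.2 <;> simp [letterImage, h, hf]

theorem letterImage_pair_ne_one {a b : G} (ha : a ≠ 1) (hb : b ≠ 1) (u : Fin 2 × Bool) :
    letterImage ![a, b] u ≠ 1 :=
  letterImage_ne_one (Fin.forall_fin_two.2 ⟨ha, hb⟩) u

theorem lift_mk_append_singleton (f : ι → G) (L : List (ι × Bool)) (u : ι × Bool) :
    FreeGroup.lift f (.mk (L ++ [u])) = FreeGroup.lift f (.mk L) * letterImage f u := by
  rw [← FreeGroup.mul_mk, map_mul]
  simp [letterImage]

theorem eq_of_isReduced_pair_of_fst_eq {u v : ι × Bool} (h : FreeGroup.IsReduced [u, v])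
    (h₁ : u.1 = v.1) : u = v :=
  Prod.ext h₁ ((FreeGroup.isReduced_cons_cons.1 h).1 h₁)

end LetterImage

section Palindromic

open FreeGroup

variable {α : Type*}

def IsReverseConjByPalindrome (p : FreeGroup α × FreeGroup α) : Prop :=
  ∃ c, reverse c = c ∧ reverse p.1 = c⁻¹ * p.1 * c ∧ reverse p.2 = c⁻¹ * p.2 * c

theorem NielsenMove.isReverseConjByPalindrome {p q : FreeGroup α × FreeGroup α}
    (h : NielsenMove p q) (hq : IsReverseConjByPalindrome q) : IsReverseConjByPalindrome p := by
  obtain ⟨c, hc, h₁, h₂⟩ := hq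
  cases h with
  | swap a b => exact ⟨c, hc, h₂, h₁⟩
  | inv_left a b =>
    refine ⟨c, hc, ?_, h₂⟩
    rw [← inv_inv (reverse a), ← reverse_inv, h₁]
    group
  | mul_left a b =>
    refine ⟨b * c, by rw [reverse_mul, hc, h₂]; group, ?_, by rw [h₂]; group⟩
    rw [show reverse a = (reverse b)⁻¹ * reverse (a * b) by rw [reverse_mul]; group, h₁, h₂]
    group
  | conj a b g =>
    have key (x : FreeGroup α) (hx : reverse (g⁻¹ * x * g) = c⁻¹ * (g⁻¹ * x * g) * c) :
        reverse x = (g * c * reverse g)⁻¹ * x * (g * c * reverse g) := by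
      rw [show reverse x = (reverse g)⁻¹ * reverse (g⁻¹ * x * g) * reverse g by
        rw [reverse_mul, reverse_mul, reverse_inv]; group, hx]
      group
    exact ⟨g * c * reverse g, by rw [reverse_mul, reverse_mul, reverse_reverse, hc, mul_assoc],
      key a h₁, key b h₂⟩

theorem IsReverseConjByPalindrome.of_reflTransGen {p q : FreeGroup α × FreeGroup α}
    (h : ReflTransGen NielsenMove p q) (hq : IsReverseConjByPalindrome q) :
    IsReverseConjByPalindrome p := by
  induction h with
  | refl => exact hq
  | tail _ hmove ih => exact ih (hmove.isReverseConjByPalindrome hq)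

end Palindromic

section NielsenReduced

open FreeGroup

variable {ι α : Type*} [DecidableEq α]

theorem norm_letterImage (f : ι → FreeGroup α) (u : ι × Bool) :
    (letterImage f u).norm = (f u.1).norm := by
  cases h : u.2 <;> simp [letterImage, h, norm_inv_eq]

/-- Nielsen's conditions (N0), (N1), (N2) on the letters of `f`; given (N1), the last one says that
the middle letter of a reduced three-letter word is never cancelled completely. -/
structure IsNielsenReduced (f : ι → FreeGroup α) : Prop where
  ne_one : ∀ i, f i ≠ 1
  norm_le_norm_mul_left : ∀ u v, IsReduced [u, v] →
    (letterImage f u).norm ≤ (letterImage f u * letterImage f v).norm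
  norm_le_norm_mul_right : ∀ u v, IsReduced [u, v] →
    (letterImage f v).norm ≤ (letterImage f u * letterImage f v).norm
  norm_add_norm_lt : ∀ u v w, IsReduced [u, v, w] →
    (letterImage f u).norm + (letterImage f w).norm <
      (letterImage f u * letterImage f v).norm + (letterImage f v * letterImage f w).norm

variable {f : ι → FreeGroup α}

/-- `S` is what survives of the last letter in the product, and it outlives the cancellation by
any next letter `v`. -/
theorem IsNielsenReduced.exists_toWord_lift_mk (hf : IsNielsenReduced f) :
    ∀ (L : List (ι × Bool)) (u : ι × Bool), IsReduced (L ++ [u]) →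
      ∃ X S, (lift f (FreeGroup.mk (L ++ [u]))).toWord = X ++ S ∧
        S <:+ (letterImage f u).toWord ∧ L.length ≤ X.length ∧ ∀ v, IsReduced [u, v] →
          (letterImage f u).norm + (letterImage f v).norm <
            (letterImage f u * letterImage f v).norm + 2 * S.length := by
  intro L
  induction L using List.reverseRecOn with
  | nil =>
    intro u _
    refine ⟨[], (letterImage f u).toWord, by simp [letterImage], List.suffix_refl _, le_rfl,
      fun v huv => ?_⟩
    have h₁ := hf.norm_le_norm_mul_right u v huv
    have h₂ := norm_eq_zero.not.2 (letterImage_ne_one hf.ne_one u)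
    simp only [FreeGroup.norm] at h₁ h₂ ⊢
    omega
  | append_singleton L u' ih =>
    intro u hred
    have hu'u : IsReduced [u', u] := hred.infix ⟨L, [], by simp⟩
    obtain ⟨X, S, hw, hS, hX, hlt⟩ := ih u' (hred.infix ⟨[], [u], by simp⟩)
    obtain ⟨S₀, V, hwu, hS₀, hV, hVlen⟩ := exists_toWord_mul_of_suffix hw hS (hlt u hu'u)
    refine ⟨X ++ S₀, V, by rw [lift_mk_append_singleton, hwu], hV, ?_, fun v huv => ?_⟩
    · have := List.length_pos_of_ne_nil hS₀
      simp only [List.length_append, List.length_singleton]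
      omega
    · have := hf.norm_add_norm_lt u' u v
        (isReduced_cons_cons.2 ⟨(isReduced_cons_cons.1 hu'u).1, huv⟩)
      omega

theorem IsNielsenReduced.norm_le_norm_lift [DecidableEq ι] (hf : IsNielsenReduced f)
    (w : FreeGroup ι) : w.norm ≤ (lift f w).norm := by
  obtain h | ⟨L, u, h⟩ := List.eq_nil_or_concat w.toWord
  · simp [FreeGroup.norm, h]
  rw [List.concat_eq_append] at h
  obtain ⟨X, S, hw, -, hX, hlt⟩ := hf.exists_toWord_lift_mk L u (h ▸ isReduced_toWord)
  have hS := hlt u (isReduced_cons_cons.2 ⟨fun _ => rfl, .singleton⟩)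
  have := norm_mul_le (letterImage f u) (letterImage f u)
  have hwn : w.norm = L.length + 1 := by simp [FreeGroup.norm, h]
  have hlift : lift f w = lift f (FreeGroup.mk (L ++ [u])) := by rw [← h, mk_toWord]
  rw [hwn, hlift]
  simp only [FreeGroup.norm, hw, List.length_append] at hS this ⊢
  omega

theorem IsNielsenReduced.exists_letterImage_eq_of [DecidableEq ι] (hf : IsNielsenReduced f)
    (hsurj : Function.Surjective (lift f)) (a : α) : ∃ u, letterImage f u = of a := by
  obtain ⟨w, hw⟩ := hsurj (of a)
  have hle := hf.norm_le_norm_lift w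
  rw [hw, norm_of] at hle
  have hne : w ≠ 1 := by
    rintro rfl
    exact of_ne_one a (by simpa using hw.symm)
  obtain ⟨u, hu⟩ := List.length_eq_one_iff.1
    (le_antisymm hle (Nat.pos_of_ne_zero (norm_eq_zero.not.2 hne)))
  exact ⟨u, by rw [← hw, ← mk_toWord (x := w), hu]; simp [letterImage]⟩

theorem IsNielsenReduced.norm_eq_one {a b : FreeGroup (Fin 2)} (hf : IsNielsenReduced ![a, b])
    (hsurj : Function.Surjective (lift ![a, b])) : a.norm = 1 ∧ b.norm = 1 := by
  obtain ⟨⟨i, s⟩, hi⟩ := hf.exists_letterImage_eq_of hsurj 0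
  obtain ⟨⟨j, t⟩, hj⟩ := hf.exists_letterImage_eq_of hsurj 1
  have hij : i ≠ j := by
    rintro rfl
    have : (of 1 : FreeGroup (Fin 2)) = of 0 ∨ (of 1 : FreeGroup (Fin 2)) = (of 0)⁻¹ := by
      rw [← hi, ← hj]
      cases s <;> cases t <;> simp [letterImage]
    revert this
    decide
  have hi' := congrArg FreeGroup.norm hi
  have hj' := congrArg FreeGroup.norm hj
  rw [norm_letterImage, norm_of] at hi' hj'
  fin_cases i <;> fin_cases j <;> simp_all

end NielsenReduced

section NielsenMinimal

open FreeGroup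

variable {α : Type*} [DecidableEq α]

def IsNielsenMinimal (p : FreeGroup α × FreeGroup α) : Prop :=
  ∀ q, ReflTransGen NielsenMove p q → p.1.norm + p.2.norm ≤ q.1.norm + q.2.norm

variable {a b : FreeGroup α}

theorem norm_letterImage_add_norm_letterImage {u v : Fin 2 × Bool} (h : u.1 ≠ v.1) :
    (letterImage ![a, b] u).norm + (letterImage ![a, b] v).norm = a.norm + b.norm := by
  rw [norm_letterImage, norm_letterImage]
  obtain ⟨i, s⟩ := u
  obtain ⟨j, t⟩ := v
  fin_cases i <;> fin_cases j <;> simp_all [add_comm]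

theorem norm_lt_norm_letterImage_mul_self (ha : a ≠ 1) (hb : b ≠ 1) (u : Fin 2 × Bool) :
    (letterImage ![a, b] u).norm < (letterImage ![a, b] u * letterImage ![a, b] u).norm :=
  norm_lt_norm_mul_self (letterImage_pair_ne_one ha hb u)

namespace IsNielsenMinimal

theorem norm_le_norm_mul_left (hmin : IsNielsenMinimal (a, b)) (ha : a ≠ 1) (hb : b ≠ 1)
    {u v : Fin 2 × Bool} (huv : IsReduced [u, v]) :
    (letterImage ![a, b] u).norm ≤ (letterImage ![a, b] u * letterImage ![a, b] v).norm := by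
  by_cases h : u.1 = v.1
  · obtain rfl := eq_of_isReduced_pair_of_fst_eq huv h
    exact (norm_lt_norm_letterImage_mul_self ha hb u).le
  · have hle := hmin _ ((reflTransGen_nielsenMove_letterImage a b h).tail (.mul_left _ _))
    have := norm_letterImage_add_norm_letterImage (a := a) (b := b) h
    dsimp only at hle
    omega

theorem norm_le_norm_mul_right (hmin : IsNielsenMinimal (a, b)) (ha : a ≠ 1) (hb : b ≠ 1)
    {u v : Fin 2 × Bool} (huv : IsReduced [u, v]) :
    (letterImage ![a, b] v).norm ≤ (letterImage ![a, b] u * letterImage ![a, b] v).norm := by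
  by_cases h : u.1 = v.1
  · obtain rfl := eq_of_isReduced_pair_of_fst_eq huv h
    exact (norm_lt_norm_letterImage_mul_self ha hb u).le
  · have h' : (v.1, !v.2).1 ≠ (u.1, !u.2).1 := Ne.symm h
    have hle := hmin _ ((reflTransGen_nielsenMove_letterImage a b h').tail (.mul_left _ _))
    have := norm_letterImage_add_norm_letterImage (a := a) (b := b) h
    simp only [letterImage_not, ← mul_inv_rev, norm_inv_eq] at hle
    omega

theorem norm_add_norm_lt (hmin : IsNielsenMinimal (a, b)) (ha : a ≠ 1) (hb : b ≠ 1)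
    {u v w : Fin 2 × Bool} (huvw : IsReduced [u, v, w]) :
    (letterImage ![a, b] u).norm + (letterImage ![a, b] w).norm <
      (letterImage ![a, b] u * letterImage ![a, b] v).norm +
        (letterImage ![a, b] v * letterImage ![a, b] w).norm := by
  obtain ⟨huv, hvw⟩ : IsReduced [u, v] ∧ IsReduced [v, w] :=
    ⟨huvw.infix ⟨[], [w], rfl⟩, huvw.infix ⟨[u], [], rfl⟩⟩
  have h₁ := norm_le_norm_mul_left hmin ha hb huv
  have h₂ := norm_le_norm_mul_right hmin ha hb huv
  have h₃ := norm_le_norm_mul_right hmin ha hb hvw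
  by_contra! hle
  have hyx : (letterImage ![a, b] u * letterImage ![a, b] v).norm =
      (letterImage ![a, b] u).norm := by omega
  have hxw : (letterImage ![a, b] v * letterImage ![a, b] w).norm =
      (letterImage ![a, b] w).norm := by omega
  have hx := norm_lt_norm_letterImage_mul_self ha hb v
  have huv₁ : u.1 ≠ v.1 := fun h => by
    obtain rfl := eq_of_isReduced_pair_of_fst_eq huv h
    omega
  have hvw₁ : v.1 ≠ w.1 := fun h => by
    obtain rfl := eq_of_isReduced_pair_of_fst_eq hvw h
    omega
  have hwu₁ : w.1 = u.1 := by omega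
  have hv := letterImage_pair_ne_one ha hb v
  by_cases hwu₂ : w.2 = u.2
  · obtain rfl : w = u := Prod.ext hwu₁ hwu₂
    obtain ⟨g, hg⟩ := exists_norm_conj_add_norm_conj_le hyx hxw (h₂.trans hyx.le)
    have := hmin _ (((reflTransGen_nielsenMove_letterImage a b huv₁).tail
      (.mul_left _ _)).tail (.conj _ _ g))
    have := norm_letterImage_add_norm_letterImage (a := a) (b := b) huv₁
    have := norm_eq_zero.not.2 hv
    dsimp only at *
    omega
  · have hw : letterImage ![a, b] w = (letterImage ![a, b] u)⁻¹ := by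
      rw [← letterImage_not, ← hwu₁, ← Bool.eq_not.2 hwu₂]
    rw [hw, norm_inv_eq] at hxw
    exact hv (eq_one_of_norm_mul_eq_of_norm_mul_inv_eq hyx hxw)

theorem isNielsenReduced (hmin : IsNielsenMinimal (a, b)) (ha : a ≠ 1) (hb : b ≠ 1) :
    IsNielsenReduced ![a, b] where
  ne_one := Fin.forall_fin_two.2 ⟨ha, hb⟩
  norm_le_norm_mul_left _ _ := norm_le_norm_mul_left hmin ha hb
  norm_le_norm_mul_right _ _ := norm_le_norm_mul_right hmin ha hb
  norm_add_norm_lt _ _ _ := norm_add_norm_lt hmin ha hb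

end IsNielsenMinimal

end NielsenMinimal

section RankTwo

open FreeGroup

theorem FreeGroup.closure_one_pair_ne_top (c : FreeGroup (Fin 2)) :
    Subgroup.closure {1, c} ≠ ⊤ := by
  intro h
  rw [Subgroup.closure_insert_one, ← Subgroup.zpowers_eq_closure] at h
  obtain ⟨m, hm⟩ := Subgroup.mem_zpowers_iff.1 (h ▸ Subgroup.mem_top (of 0))
  obtain ⟨n, hn⟩ := Subgroup.mem_zpowers_iff.1 (h ▸ Subgroup.mem_top (of 1))
  have : (of 0 : FreeGroup (Fin 2)) * of 1 = of 1 * of 0 := by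
    rw [← hm, ← hn]
    exact ((Commute.refl c).zpow_zpow m n).eq
  exact absurd this (by decide)

theorem FreeGroup.ne_one_of_closure_pair_eq_top {a b : FreeGroup (Fin 2)}
    (h : Subgroup.closure {a, b} = ⊤) : a ≠ 1 ∧ b ≠ 1 :=
  ⟨by rintro rfl; exact closure_one_pair_ne_top b h,
    by rintro rfl; exact closure_one_pair_ne_top a (by rwa [Set.pair_comm])⟩

theorem closure_pair_eq_top_iff_surjective_lift {G : Type*} [Group G] {a b : G} :
    Subgroup.closure {a, b} = ⊤ ↔ Function.Surjective (lift ![a, b]) := by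
  rw [lift_surjective_iff_closure_range_eq_top, Matrix.range_cons_cons_empty]

theorem isReverseConjByPalindrome_of_closure_eq_top
    (p : FreeGroup (Fin 2) × FreeGroup (Fin 2)) (hp : Subgroup.closure {p.1, p.2} = ⊤) :
    IsReverseConjByPalindrome p := by
  obtain ⟨ha, hb⟩ := ne_one_of_closure_pair_eq_top hp
  by_cases hmin : IsNielsenMinimal p
  · obtain ⟨a, b⟩ := p
    have hsurj : Function.Surjective (lift ![a, b]) := by
      rwa [← closure_pair_eq_top_iff_surjective_lift]
    obtain ⟨h₁, h₂⟩ := (hmin.isNielsenReduced ha hb).norm_eq_one hsurj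
    refine ⟨1, reverse_one, ?_, ?_⟩ <;> simp only [inv_one, one_mul, mul_one]
    · exact reverse_eq_self_of_norm_eq_one h₁
    · exact reverse_eq_self_of_norm_eq_one h₂
  · obtain ⟨q, hpq, hlt⟩ : ∃ q, ReflTransGen NielsenMove p q ∧
        q.1.norm + q.2.norm < p.1.norm + p.2.norm := by
      simpa [IsNielsenMinimal] using hmin
    exact (isReverseConjByPalindrome_of_closure_eq_top q
      (closure_eq_top_of_reflTransGen hpq hp)).of_reflTransGen hpq
termination_by p.1.norm + p.2.norm

theorem MulEquiv.closure_pair_apply_of_eq_top (φ : FreeGroup (Fin 2) ≃* FreeGroup (Fin 2)) :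
    Subgroup.closure {φ (of 0), φ (of 1)} = ⊤ := by
  have : lift ![φ (of 0), φ (of 1)] = φ.toMonoidHom := by
    ext i
    fin_cases i <;> simp
  rw [closure_pair_eq_top_iff_surjective_lift, this]
  exact φ.surjective

end RankTwo

/-- every primitive element of the free group of rank 2 is a product of
at most two palindromes. -/
theorem primitive_is_product_of_two_palindromes (w : FreeGroup (Fin 2))
    (hw : IsPrimitive w) :
    ∃ p q : FreeGroup (Fin 2), IsPalindrome p ∧ IsPalindrome q ∧ w = p * q := by
  obtain ⟨φ, x, rfl⟩ := hw
  obtain ⟨c, hc, h₀, h₁⟩ := isReverseConjByPalindrome_of_closure_eq_top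
    (φ (.of 0), φ (.of 1)) φ.closure_pair_apply_of_eq_top
  have hx : FreeGroup.reverse (φ (.of x)) = c⁻¹ * φ (.of x) * c := by
    fin_cases x
    exacts [h₀, h₁]
  exact ⟨c, c⁻¹ * φ (.of x), (isPalindrome_iff_reverse_eq c).2 hc,
    (isPalindrome_iff_reverse_eq _).2 (FreeGroup.reverse_inv_mul_eq_of_reverse_eq_conj hc hx),
    by group⟩
end

section
/- For a free group F of rank n > 2 and every k ∈ ℕ, there exists a primitive element of F that is not a product of at most k palindromes. In particular, if z, x, y are distinct basis elements and w is a word in x, y that is not a product of k palindromes in F(x,y), then zw is a primitive element of F that is not a product of k palindromes. -/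
/-!
Fix a weight `ω` on pairs of letters and let `Σ_ω` be the sum of `ω` over adjacent letters of a
reduced word. If `ω` is antisymmetric, reversing a word negates `Σ_ω`, so `Σ_ω` vanishes on
palindromes. If moreover `ω` is unchanged by inverting both letters and `|ω| ≤ 1`, then `Σ_ω` is a
quasimorphism of defect 3: writing the reduced words as `u = p c`, `v = c⁻¹ s` and `u v = p s`,
we have `Σ_ω c⁻¹ = -Σ_ω c`, so `Σ_ω (u v) - Σ_ω u - Σ_ω v` is a sum of three junction terms.
Hence `|Σ_ω| ≤ 3k` on products of `k` palindromes, whereas the weight counting `xy`, `x⁻¹y⁻¹`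
minus `yx`, `y⁻¹x⁻¹` takes the value `2n` on `[x, y]ⁿ`.

For `w ∈ F(x, y)`, the retraction `F → F(x, y)` killing the other letters sends generators to
palindromes, hence palindromes to palindromes, and `z w` to `w`. And `z w` is primitive, being the
image of `z` under the transvection `z ↦ z w`, which is invertible because `w` does not involve
`z`.
-/

namespace List

variable {β : Type*} (ω : β → β → ℤ)

def adjacentSum : List β → ℤ
  | a :: b :: l => ω a b + adjacentSum (b :: l)
  | _ => 0

variable {ω}

@[simp] theorem adjacentSum_nil : adjacentSum ω [] = 0 := rfl

@[simp] theorem adjacentSum_singleton (a : β) : adjacentSum ω [a] = 0 := rfl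

@[simp] theorem adjacentSum_cons_cons (a b : β) (l : List β) :
    adjacentSum ω (a :: b :: l) = ω a b + adjacentSum ω (b :: l) := rfl

theorem adjacentSum_append_cons (l₁ : List β) (b : β) (l₂ : List β) :
    adjacentSum ω (l₁ ++ b :: l₂) = adjacentSum ω (l₁ ++ [b]) + adjacentSum ω (b :: l₂) := by
  induction l₁ with
  | nil => simp
  | cons a t ih =>
    cases t with
    | nil => simp
    | cons c t => simp only [cons_append, adjacentSum_cons_cons] at ih ⊢; rw [ih]; ring

theorem abs_adjacentSum_concat_sub_le (hω : ∀ a b, |ω a b| ≤ 1) (l : List β) (b : β) :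
    |adjacentSum ω (l ++ [b]) - adjacentSum ω l| ≤ 1 := by
  obtain rfl | ⟨l, a, rfl⟩ := l.eq_nil_or_concat'
  · simp
  · rw [append_assoc, singleton_append, adjacentSum_append_cons]
    simpa using hω a b

theorem abs_adjacentSum_append_sub_le (hω : ∀ a b, |ω a b| ≤ 1) (l₁ l₂ : List β) :
    |adjacentSum ω (l₁ ++ l₂) - adjacentSum ω l₁ - adjacentSum ω l₂| ≤ 1 := by
  cases l₂ with
  | nil => simp
  | cons b l₂ =>
    rw [adjacentSum_append_cons, add_sub_right_comm, add_sub_cancel_right]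
    exact abs_adjacentSum_concat_sub_le hω l₁ b

theorem adjacentSum_reverse (hω : ∀ a b, ω b a = -ω a b) (l : List β) :
    adjacentSum ω l.reverse = -adjacentSum ω l := by
  induction l with
  | nil => rfl
  | cons a t ih =>
    cases t with
    | nil => rfl
    | cons b t =>
      have hrev : (a :: b :: t).reverse = t.reverse ++ b :: [a] := by simp
      rw [hrev, adjacentSum_append_cons, ← reverse_cons, ih, adjacentSum_cons_cons,
        adjacentSum_singleton, hω, adjacentSum_cons_cons]
      ring

theorem adjacentSum_map {γ : Type*} {f : γ → β} {ω' : γ → γ → ℤ}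
    (hω : ∀ a b, ω (f a) (f b) = ω' a b) (l : List γ) :
    adjacentSum ω (l.map f) = adjacentSum ω' l := by
  induction l with
  | nil => rfl
  | cons a t ih =>
    cases t with
    | nil => rfl
    | cons b t => simp only [map_cons, adjacentSum_cons_cons] at ih ⊢; rw [ih, hω]

end List

namespace FreeGroup

variable {α : Type*}

theorem exists_reduce_append_eq [DecidableEq α] {l₁ l₂ : List (α × Bool)} (h₁ : IsReduced l₁)
    (h₂ : IsReduced l₂) :
    ∃ p c s, l₁ = p ++ c ∧ l₂ = invRev c ++ s ∧ reduce (l₁ ++ l₂) = p ++ s := by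
  induction l₂ generalizing l₁ with
  | nil => exact ⟨l₁, [], [], by simp, by simp [invRev], by simpa using h₁.reduce_eq⟩
  | cons b l₂ ih =>
    obtain rfl | ⟨l₁, a, rfl⟩ := l₁.eq_nil_or_concat'
    · exact ⟨[], [], b :: l₂, rfl, by simp [invRev], by simpa using h₂.reduce_eq⟩
    by_cases hab : a.1 = b.1 → a.2 = b.2
    · refine ⟨l₁ ++ [a], [], b :: l₂, by simp, by simp [invRev], IsReduced.reduce_eq ?_⟩
      exact h₁.append h₂ (by simpa using hab)
    · obtain ⟨x, e⟩ := a
      obtain ⟨y, f⟩ := b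
      obtain ⟨rfl, rfl⟩ : x = y ∧ f = !e := by cases e <;> cases f <;> simp_all
      obtain ⟨p, c, s, rfl, rfl, hred⟩ :=
        ih (h₁.infix ⟨[], [(x, e)], rfl⟩) (h₂.infix ⟨[(x, !e)], [], by simp⟩)
      refine ⟨p, c ++ [(x, e)], s, by simp, by simp [invRev], ?_⟩
      rw [← hred, List.append_assoc, List.singleton_append]
      exact reduce.Step.eq Red.Step.not

theorem exists_toWord_mul_eq [DecidableEq α] (u v : FreeGroup α) :
    ∃ p c s, u.toWord = p ++ c ∧ v.toWord = invRev c ++ s ∧ (u * v).toWord = p ++ s := by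
  rw [toWord_mul]
  exact exists_reduce_append_eq isReduced_toWord isReduced_toWord

section Quasimorphism

variable {ω : α × Bool → α × Bool → ℤ} (hanti : ∀ a b, ω b a = -ω a b)
  (hinv : ∀ a b, ω (a.1, !a.2) (b.1, !b.2) = ω a b) (hω : ∀ a b, |ω a b| ≤ 1)
include hanti hinv

theorem adjacentSum_invRev (l : List (α × Bool)) :
    (invRev l).adjacentSum ω = -l.adjacentSum ω := by
  rw [invRev, List.adjacentSum_reverse hanti, List.adjacentSum_map hinv]

include hω

theorem abs_adjacentSum_toWord_mul_sub_le [DecidableEq α] (u v : FreeGroup α) :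
    |(u * v).toWord.adjacentSum ω - u.toWord.adjacentSum ω - v.toWord.adjacentSum ω| ≤ 3 := by
  obtain ⟨p, c, s, hu, hv, huv⟩ := exists_toWord_mul_eq u v
  have hpc := abs_le.mp (List.abs_adjacentSum_append_sub_le hω p c)
  have hcs := abs_le.mp (List.abs_adjacentSum_append_sub_le hω (invRev c) s)
  have hps := abs_le.mp (List.abs_adjacentSum_append_sub_le hω p s)
  rw [adjacentSum_invRev hanti hinv] at hcs
  rw [hu, hv, huv, abs_le]
  constructor <;> linarith

end Quasimorphism

end FreeGroup

theorem IsPalindrome.adjacentSum_toWord_eq_zero {α : Type*} [DecidableEq α]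
    {ω : α × Bool → α × Bool → ℤ} (hanti : ∀ a b, ω b a = -ω a b) {w : FreeGroup α}
    (hw : IsPalindrome w) : w.toWord.adjacentSum ω = 0 := by
  have hrev := List.adjacentSum_reverse hanti w.toWord
  rw [hw] at hrev
  omega

theorem IsProductOfAtMost.abs_adjacentSum_toWord_le {α : Type*} [DecidableEq α]
    {ω : α × Bool → α × Bool → ℤ} (hanti : ∀ a b, ω b a = -ω a b)
    (hinv : ∀ a b, ω (a.1, !a.2) (b.1, !b.2) = ω a b) (hω : ∀ a b, |ω a b| ≤ 1) {k : ℕ}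
    {w : FreeGroup α} (hw : IsProductOfAtMost {p | IsPalindrome p} k w) :
    |w.toWord.adjacentSum ω| ≤ 3 * k := by
  obtain ⟨l, hlen, hpal, rfl⟩ := hw
  suffices |l.prod.toWord.adjacentSum ω| ≤ 3 * l.length by
    have : (l.length : ℤ) ≤ k := by exact_mod_cast hlen
    linarith
  clear hlen
  induction l with
  | nil => simp
  | cons p l ih =>
    have hp := (hpal p List.mem_cons_self).adjacentSum_toWord_eq_zero hanti
    have hl := ih fun q hq => hpal q (List.mem_cons_of_mem p hq)
    have hmul := FreeGroup.abs_adjacentSum_toWord_mul_sub_le hanti hinv hω p l.prod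
    rw [hp, sub_zero] at hmul
    rw [List.prod_cons, List.length_cons, Nat.cast_succ, abs_le]
    rw [abs_le] at hl hmul
    constructor <;> linarith

theorem IsProductOfAtMost.map {G H F : Type*} [Monoid G] [Monoid H] [FunLike F G H]
    [MonoidHomClass F G H] (f : F) {S : Set G} {T : Set H} (hST : Set.MapsTo f S T) {k : ℕ}
    {w : G} (hw : IsProductOfAtMost S k w) : IsProductOfAtMost T k (f w) := by
  obtain ⟨l, hlen, hS, rfl⟩ := hw
  refine ⟨l.map f, by simpa using hlen, ?_, (map_list_prod f l).symm⟩
  simpa using fun x hx => hST (hS x hx)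

namespace FreeGroup

section Commutator

open scoped commutatorElement

/-- `(false, b)` and `(true, b)` are the letters `x^±1` and `y^±1`, with sign `+` iff `b`. -/
def commutatorWeight : Bool × Bool → Bool × Bool → ℤ
  | (false, true), (true, true) => 1
  | (false, false), (true, false) => 1
  | (true, true), (false, true) => -1
  | (true, false), (false, false) => -1
  | _, _ => 0

theorem commutatorWeight_swap (a b : Bool × Bool) :
    commutatorWeight b a = -commutatorWeight a b := by
  revert a b; decide

theorem commutatorWeight_inv (a b : Bool × Bool) :
    commutatorWeight (a.1, !a.2) (b.1, !b.2) = commutatorWeight a b := by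
  revert a b; decide

theorem abs_commutatorWeight_le (a b : Bool × Bool) : |commutatorWeight a b| ≤ 1 := by
  revert a b; decide

theorem toWord_commutator_of_false_of_true_pow (n : ℕ) :
    (⁅of false, of true⁆ ^ n : FreeGroup Bool).toWord =
      (List.replicate n [(false, true), (true, true), (false, false), (true, false)]).flatten := by
  have hword : (⁅of false, of true⁆ : FreeGroup Bool).toWord =
      [(false, true), (true, true), (false, false), (true, false)] := rfl
  rw [toWord_pow, hword]
  rcases n.eq_zero_or_pos with rfl | hn
  · rfl
  · simpa using (IsReduced.append_flatten_replicate_append (L₁ := []) (L₃ := [])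
      (by unfold IsCyclicallyReduced IsReduced; decide) (by unfold IsReduced; decide)
      hn.ne').reduce_eq

theorem adjacentSum_toWord_commutator_of_false_of_true_pow (n : ℕ) :
    (⁅of false, of true⁆ ^ n : FreeGroup Bool).toWord.adjacentSum commutatorWeight = 2 * n := by
  rw [toWord_commutator_of_false_of_true_pow]
  set L : List (Bool × Bool) := [(false, true), (true, true), (false, false), (true, false)]
  have hstep (l : List (Bool × Bool)) :
      (L ++ (L ++ l)).adjacentSum commutatorWeight =
        2 + (L ++ l).adjacentSum commutatorWeight := by
    show (L ++ (false, true) :: ((true, true) :: (false, false) :: (true, false) :: l)).adjacentSum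
      _ = _
    rw [List.adjacentSum_append_cons]
    rfl
  induction n with
  | zero => rfl
  | succ n ih =>
    cases n with
    | zero => rfl
    | succ n =>
      rw [List.replicate_succ, List.flatten_cons] at ih
      rw [List.replicate_succ, List.flatten_cons, List.replicate_succ, List.flatten_cons, hstep,
        ih]
      push_cast
      ring

theorem exists_not_isProductOfAtMost_palindromes (k : ℕ) :
    ∃ w : FreeGroup Bool, ¬ IsProductOfAtMost {p | IsPalindrome p} k w := by
  refine ⟨⁅of false, of true⁆ ^ (2 * k + 1), fun h => ?_⟩
  have := h.abs_adjacentSum_toWord_le commutatorWeight_swap commutatorWeight_inv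
    abs_commutatorWeight_le
  rw [adjacentSum_toWord_commutator_of_false_of_true_pow, abs_of_nonneg (by positivity)] at this
  omega

end Commutator

def invertGenerators : FreeGroup α →* FreeGroup α :=
  lift fun a => (of a)⁻¹

@[simp] theorem invertGenerators_of (a : α) : invertGenerators (of a) = (of a)⁻¹ :=
  lift_apply_of

theorem invertGenerators_mk (L : List (α × Bool)) :
    invertGenerators (mk L) = mk (L.map fun g => (g.1, !g.2)) := by
  rw [← lift_of_apply (mk (L.map _)), invertGenerators, lift_mk, lift_mk, List.map_map]
  congr 2
  funext ⟨a, b⟩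
  cases b <;> simp

variable [DecidableEq α]

theorem toWord_invertGenerators (w : FreeGroup α) :
    (invertGenerators w).toWord = w.toWord.map fun g => (g.1, !g.2) := by
  rw [← mk_toWord (x := w), invertGenerators_mk, toWord_mk, toWord_mk, reduce_toWord]
  exact IsReduced.reduce_eq <| (List.isChain_map _).2 <|
    isReduced_toWord.imp fun a b hab hab₁ => by simpa using hab hab₁

theorem isPalindrome_iff_invertGenerators_eq_inv {w : FreeGroup α} :
    IsPalindrome w ↔ invertGenerators w = w⁻¹ := by
  rw [IsPalindrome, ← toWord_inj, toWord_invertGenerators, toWord_inv, invRev, ← List.map_reverse,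
    (List.map_injective_iff.2 _).eq_iff, eq_comm]
  exact Function.Involutive.injective fun g => by simp

end FreeGroup

theorem IsPalindrome.lift {α β : Type*} [DecidableEq α] [DecidableEq β] {f : α → FreeGroup β}
    (hf : ∀ a, IsPalindrome (f a)) {w : FreeGroup α} (hw : IsPalindrome w) :
    IsPalindrome (FreeGroup.lift f w) := by
  simp only [FreeGroup.isPalindrome_iff_invertGenerators_eq_inv] at hf hw ⊢
  have hcomm : FreeGroup.invertGenerators.comp (FreeGroup.lift f) =
      (FreeGroup.lift f).comp FreeGroup.invertGenerators :=
    FreeGroup.ext_hom _ _ fun a => by simp [hf]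
  rw [← MonoidHom.comp_apply, hcomm, MonoidHom.comp_apply, hw, map_inv]

namespace FreeGroup

variable {X : Type*} [DecidableEq X]

def retraction (x y : X) : FreeGroup X →* FreeGroup Bool :=
  lift fun t => if t = x then of false else if t = y then of true else 1

theorem retraction_of_of_ne {x y t : X} (hx : t ≠ x) (hy : t ≠ y) : retraction x y (of t) = 1 := by
  simp [retraction, hx, hy]

theorem retraction_lift {x y : X} (hxy : x ≠ y) (w : FreeGroup Bool) :
    retraction x y (lift (fun b : Bool => if b then of y else of x) w) = w := by
  have hcomp : (retraction x y).comp (lift fun b : Bool => if b then of y else of x) =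
      MonoidHom.id _ :=
    ext_hom _ _ fun b => by cases b <;> simp [retraction, hxy.symm]
  exact DFunLike.congr_fun hcomp w

theorem mapsTo_retraction_palindromes (x y : X) :
    Set.MapsTo (retraction x y) {p | IsPalindrome p} {p | IsPalindrome p} :=
  fun _ hp => IsPalindrome.lift (fun _ => by split_ifs <;> rfl) hp

theorem not_isProductOfAtMost_palindromes_of_mul_lift {x y z : X} (hxy : x ≠ y) (hxz : x ≠ z)
    (hyz : y ≠ z) {k : ℕ} {w : FreeGroup Bool}
    (hw : ¬ IsProductOfAtMost {p | IsPalindrome p} k w) :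
    ¬ IsProductOfAtMost {p | IsPalindrome p} k
      (of z * lift (fun b : Bool => if b then of y else of x) w) := fun h => hw <| by
  simpa [retraction_of_of_ne hxz.symm hyz.symm, retraction_lift hxy] using
    h.map (retraction x y) (mapsTo_retraction_palindromes x y)

def transvection (z : X) (v : FreeGroup X) : FreeGroup X →* FreeGroup X :=
  lift fun t => if t = z then of z * v else of t

@[simp] theorem transvection_of_self (z : X) (v : FreeGroup X) :
    transvection z v (of z) = of z * v := by
  simp [transvection]

theorem transvection_of_of_ne {z t : X} (v : FreeGroup X) (ht : t ≠ z) :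
    transvection z v (of t) = of t := by
  simp [transvection, ht]

theorem transvection_apply_of_mem_closure {z : X} (v : FreeGroup X) {u : FreeGroup X}
    (hu : u ∈ Subgroup.closure (of '' {z}ᶜ)) : transvection z v u = u := by
  suffices Subgroup.closure (of '' {z}ᶜ) ≤ (transvection z v).eqLocus (MonoidHom.id _) from
    this hu
  rw [Subgroup.closure_le]
  rintro _ ⟨t, ht, rfl⟩
  exact transvection_of_of_ne v ht

theorem transvection_comp_transvection {z : X} (v : FreeGroup X) {v' : FreeGroup X}
    (hv' : v' ∈ Subgroup.closure (of '' {z}ᶜ)) :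
    (transvection z v).comp (transvection z v') = transvection z (v * v') := by
  refine ext_hom _ _ fun t => ?_
  rcases eq_or_ne t z with rfl | ht
  · simp [transvection_apply_of_mem_closure v hv', mul_assoc]
  · simp [transvection_of_of_ne _ ht]

theorem transvection_one (z : X) : transvection z 1 = MonoidHom.id _ := by
  refine ext_hom _ _ fun t => ?_
  rcases eq_or_ne t z with rfl | ht
  · simp
  · simp [transvection_of_of_ne _ ht]

theorem isPrimitive_of_mul_mem_closure {z : X} {u : FreeGroup X}
    (hu : u ∈ Subgroup.closure (of '' {z}ᶜ)) : IsPrimitive (of z * u) := by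
  have hu' := Subgroup.inv_mem _ hu
  refine ⟨(transvection z u).toMulEquiv (transvection z u⁻¹) ?_ ?_, z, transvection_of_self z u⟩
  · rw [transvection_comp_transvection _ hu, inv_mul_cancel, transvection_one]
  · rw [transvection_comp_transvection _ hu', mul_inv_cancel, transvection_one]

theorem isPrimitive_of_mul_lift {x y z : X} (hxz : x ≠ z) (hyz : y ≠ z) (w : FreeGroup Bool) :
    IsPrimitive (of z * lift (fun b : Bool => if b then of y else of x) w) := by
  refine isPrimitive_of_mul_mem_closure (range_lift_le ?_ ⟨w, rfl⟩)
  rintro _ ⟨b, rfl⟩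
  apply Subgroup.subset_closure
  cases b
  exacts [⟨x, hxz, rfl⟩, ⟨y, hyz, rfl⟩]

end FreeGroup

/-- in a free group of rank > 2 the palindromic length of primitive
elements is unbounded; concretely, for distinct basis letters x, y, z, if a word w in
x, y is not a product of k palindromes of F(x,y) then z·w is a primitive element that
is not a product of k palindromes. -/
theorem primitive_palindromic_length_unbounded {X : Type*} [DecidableEq X]
    (x y z : X) (hxy : x ≠ y) (hxz : x ≠ z) (hyz : y ≠ z) :
    (∀ k : ℕ, ∃ w : FreeGroup X, IsPrimitive w ∧
      ¬ IsProductOfAtMost {p : FreeGroup X | IsPalindrome p} k w) ∧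
    (∀ (k : ℕ) (w : FreeGroup Bool),
      ¬ IsProductOfAtMost {p : FreeGroup Bool | IsPalindrome p} k w →
      IsPrimitive (FreeGroup.of z *
          FreeGroup.lift (fun b : Bool => if b then FreeGroup.of y else FreeGroup.of x) w) ∧
      ¬ IsProductOfAtMost {p : FreeGroup X | IsPalindrome p} k
        (FreeGroup.of z *
          FreeGroup.lift (fun b : Bool => if b then FreeGroup.of y else FreeGroup.of x) w)) := by
  refine ⟨fun k => ?_, fun k w hw => ⟨FreeGroup.isPrimitive_of_mul_lift hxz hyz w,
    FreeGroup.not_isProductOfAtMost_palindromes_of_mul_lift hxy hxz hyz hw⟩⟩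
  obtain ⟨w, hw⟩ := FreeGroup.exists_not_isProductOfAtMost_palindromes k
  exact ⟨_, FreeGroup.isPrimitive_of_mul_lift hxz hyz w,
    FreeGroup.not_isProductOfAtMost_palindromes_of_mul_lift hxy hxz hyz hw⟩
end

section
/- The primitive width of an infinitely generated free group is two: every element is a product of two primitive elements, and not every element is primitive. -/
namespace FreeGroup

variable {X : Type*}

def liftMulEquiv (f g : X → FreeGroup X) (hgf : ∀ x, lift g (f x) = of x)
    (hfg : ∀ x, lift f (g x) = of x) : FreeGroup X ≃* FreeGroup X :=
  MonoidHom.toMulEquiv (lift f) (lift g) (ext_hom _ _ fun x => by simp [hgf])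
    (ext_hom _ _ fun x => by simp [hfg])

@[simp]
lemma liftMulEquiv_apply (f g : X → FreeGroup X) (hgf hfg) (w : FreeGroup X) :
    liftMulEquiv f g hgf hfg w = lift f w := rfl

lemma lift_eq_self_of_forall_mem_toWord [DecidableEq X] {f : X → FreeGroup X} {w : FreeGroup X}
    (hf : ∀ a ∈ w.toWord, f a.1 = of a.1) : lift f w = w := by
  conv_lhs => rw [← mk_toWord (x := w)]
  conv_rhs => rw [← lift_of_apply w, ← mk_toWord (x := w)]
  simp only [lift_mk]
  exact congrArg List.prod (List.map_congr_left fun a ha => by rw [hf a ha])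

lemma exists_forall_mem_toWord_ne [DecidableEq X] [Infinite X] (w : FreeGroup X) :
    ∃ x, ∀ a ∈ w.toWord, a.1 ≠ x := by
  obtain ⟨x, hx⟩ := (w.toWord.map Prod.fst).toFinset.exists_notMem
  exact ⟨x, fun a ha hax => hx (List.mem_toFinset.2 (hax ▸ List.mem_map_of_mem ha))⟩

end FreeGroup

open FreeGroup

lemma isPrimitive_of_inv {X : Type*} [DecidableEq X] (x : X) : IsPrimitive (of x)⁻¹ := by
  set f := Function.update of x (of x)⁻¹
  have hf : ∀ y, lift f (f y) = of y := fun y => by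
    by_cases hy : y = x
    · subst hy; simp [f]
    · simp [f, hy]
  exact ⟨liftMulEquiv f f hf hf, x, by simp [f]⟩

lemma isPrimitive_of_mul {X : Type*} [DecidableEq X] {x : X} {w : FreeGroup X}
    (hx : ∀ a ∈ w.toWord, a.1 ≠ x) : IsPrimitive (of x * w) := by
  set f := Function.update of x (of x * w)
  set g := Function.update of x (of x * w⁻¹)
  have hfw : lift f w = w :=
    lift_eq_self_of_forall_mem_toWord fun a ha => by simp [f, hx a ha]
  have hgw : lift g w = w :=
    lift_eq_self_of_forall_mem_toWord fun a ha => by simp [g, hx a ha]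
  have hgf : ∀ y, lift g (f y) = of y := fun y => by
    by_cases hy : y = x
    · subst hy; simp [f, g, hgw]
    · simp [f, g, hy]
  have hfg : ∀ y, lift f (g y) = of y := fun y => by
    by_cases hy : y = x
    · subst hy; simp [f, g, hfw]
    · simp [f, g, hy]
  exact ⟨liftMulEquiv f g hgf hfg, x, by simp [f]⟩

lemma not_isPrimitive_one {X : Type*} : ¬ IsPrimitive (1 : FreeGroup X) := by
  rintro ⟨φ, x, hx⟩
  exact of_ne_one x (φ.injective (hx.trans (_root_.map_one φ).symm))

/-- the primitive width of an infinitely generated free group is two: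
every element is a product of two primitive elements, and not every element is
primitive. -/
theorem primitive_width_infinitely_generated {X : Type*} [Infinite X] :
    (∀ w : FreeGroup X, ∃ p q : FreeGroup X,
        IsPrimitive p ∧ IsPrimitive q ∧ w = p * q) ∧
    (∃ w : FreeGroup X, ¬ IsPrimitive w) := by
  classical
  refine ⟨fun w => ?_, ⟨1, not_isPrimitive_one⟩⟩
  obtain ⟨x, hx⟩ := exists_forall_mem_toWord_ne w
  exact ⟨(of x)⁻¹, of x * w, isPrimitive_of_inv x, isPrimitive_of_mul hx, by group⟩
end
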